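/- arXiv:1412.4115 — 2 statements merged into one kernel-verified Lean document; each statement's English description precedes it below -/
import Mathlib

section
/- Denominator bound (case a): let q = 1/d with |d| ≥ 2 an integer, t = u/v with gcd(u,v) = 1, v ≥ 1, 0 < |t| < 1, and M, N ∈ ℤ. Then v^{n+K} |d|^{δ_{n,K}} · (N A_n(q^K t) − M (t)_K B_n(q^K t)) ∈ ℤ, where δ_{n,K} = (K^2−K)/2 + (3n^2+n)/2 if 0 ≤ K ≤ n and δ_{n,K} = (K^2−K)/2 + (n^2−n)/2 + nK if K > n. -/
open Finset

/-- q-Pochhammer symbol `(a)_n = ∏_{j=0}^{n-1} (1 - a q^j)`. -/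
noncomputable def qPoch (q a : ℝ) (n : ℕ) : ℝ := ∏ j ∈ Finset.range n, (1 - a * q ^ j)

/-- q-exponential `E_q(t) = ∏_{k=0}^∞ (1 - q^k t)⁻¹`. -/
noncomputable def qExp (q t : ℝ) : ℝ := ∏' k : ℕ, (1 - q ^ k * t)⁻¹

/-- q-binomial coefficient. -/
noncomputable def qBinom (q : ℝ) (n k : ℕ) : ℝ :=
  qPoch q q n / (qPoch q q k * qPoch q q (n - k))

/-- Padé numerator polynomial `A_n(t)`. -/
noncomputable def padeA (q : ℝ) (n : ℕ) (t : ℝ) : ℝ :=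
  ∑ k ∈ Finset.range (n + 1),
    qBinom q n k * q ^ (k * n) * qPoch q (q ^ (n + 1)) (n - k) * t ^ k

/-- Padé denominator polynomial `B_n(t)`. -/
noncomputable def padeB (q : ℝ) (n : ℕ) (t : ℝ) : ℝ :=
  ∑ k ∈ Finset.range (n + 1),
    qBinom q n k * q ^ (k * (k - 1) / 2) * qPoch q (q ^ (n + 1)) (n - k) * (-t) ^ k

/-- Padé remainder `S_n(t)`. -/
noncomputable def padeS (q : ℝ) (n : ℕ) (t : ℝ) : ℝ :=
  (-1) ^ n * t ^ (2 * n + 1) * q ^ ((3 * n ^ 2 + n) / 2) *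
    (qPoch q q n / qPoch q q (2 * n + 1)) *
    ∑' k : ℕ, qPoch q (q ^ (n + 1)) k * t ^ k / (qPoch q q k * qPoch q (q ^ (2 * n + 2)) k)

/-- Exponent `δ_{n,K}` in case (a). -/
def deltaA (n K : ℕ) : ℕ :=
  if K ≤ n then (K ^ 2 - K) / 2 + (3 * n ^ 2 + n) / 2
  else (K ^ 2 - K) / 2 + (n ^ 2 - n) / 2 + n * K

/-!
Every coefficient of `A_n(q^K t)` and of `(t)_K B_n(q^K t)` is a product of a Gaussian binomial,
powers of `q = 1/d`, factors `1 - q^m`, `1 - t q^j` and powers of `t = u/v`. Each factor becomes an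
integer after multiplication by explicit powers of `d` and `v`; for `[n, k]_q` the power is
`d^{k(n-k)}`, by the q-Pascal recursion. Adding up the exponents term by term, the power of `d`
never exceeds `δ_{n,K}` and the power of `v` never exceeds `n + K`.
-/

def HasDenom {R : Type*} [CommRing R] (d v : ℤ) (e f : ℕ) (x : R) : Prop :=
  x * (d : R) ^ e * (v : R) ^ f ∈ (Int.castRingHom R).range

namespace HasDenom

variable {R : Type*} [CommRing R] {d v : ℤ} {e f e' f' : ℕ} {x y : R}

theorem intCast (z : ℤ) : HasDenom d v 0 0 (z : R) := ⟨z, by simp⟩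

theorem mul (hx : HasDenom d v e f x) (hy : HasDenom d v e' f' y) :
    HasDenom d v (e + e') (f + f') (x * y) := by
  unfold HasDenom at *
  convert mul_mem hx hy using 1
  ring

theorem add (hx : HasDenom d v e f x) (hy : HasDenom d v e f y) : HasDenom d v e f (x + y) := by
  unfold HasDenom at *
  convert add_mem hx hy using 1
  ring

theorem neg (hx : HasDenom d v e f x) : HasDenom d v e f (-x) := by
  unfold HasDenom at *
  convert neg_mem hx using 1
  ring

theorem sub (hx : HasDenom d v e f x) (hy : HasDenom d v e f y) : HasDenom d v e f (x - y) :=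
  sub_eq_add_neg x y ▸ hx.add hy.neg

theorem mono (hx : HasDenom d v e f x) (he : e ≤ e') (hf : f ≤ f') : HasDenom d v e' f' x := by
  obtain ⟨a, rfl⟩ := Nat.exists_eq_add_of_le he
  obtain ⟨b, rfl⟩ := Nat.exists_eq_add_of_le hf
  unfold HasDenom at *
  convert mul_mem hx (RingHom.mem_range_self (Int.castRingHom R) (d ^ a * v ^ b)) using 1
  rw [eq_intCast]
  push_cast
  ring

theorem one : HasDenom d v e f (1 : R) := ⟨d ^ e * v ^ f, by simp⟩

theorem pow (hx : HasDenom d v e f x) (k : ℕ) : HasDenom d v (k * e) (k * f) (x ^ k) := by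
  unfold HasDenom at *
  convert pow_mem hx k using 1
  ring

theorem sum {ι : Type*} {s : Finset ι} {g : ι → R} (h : ∀ i ∈ s, HasDenom d v e f (g i)) :
    HasDenom d v e f (∑ i ∈ s, g i) := by
  unfold HasDenom at *
  rw [sum_mul, sum_mul]
  exact sum_mem h

theorem prod {ι : Type*} {s : Finset ι} {g : ι → R} {e f : ι → ℕ}
    (h : ∀ i ∈ s, HasDenom d v (e i) (f i) (g i)) :
    HasDenom d v (∑ i ∈ s, e i) (∑ i ∈ s, f i) (∏ i ∈ s, g i) := by
  unfold HasDenom at *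
  rw [← prod_pow_eq_pow_sum, ← prod_pow_eq_pow_sum, ← prod_mul_distrib, ← prod_mul_distrib]
  exact prod_mem h

theorem abs_left (hx : HasDenom d v e f x) : HasDenom |d| v e f x := by
  rcases abs_choice d with h | h <;> rw [h]
  · exact hx
  · unfold HasDenom at *
    convert mul_mem hx (RingHom.mem_range_self (Int.castRingHom R) ((-1) ^ e)) using 1
    rw [eq_intCast]
    push_cast
    ring

end HasDenom

section Field

variable {F : Type*} [Field F] {d v : ℤ}

theorem hasDenom_one_div_pow (m : ℕ) : HasDenom d v m 0 ((1 / (d : F)) ^ m) := by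
  by_cases hd : (d : F) = 0
  · rcases Nat.eq_zero_or_pos m with rfl | hm
    · exact ⟨1, by simp⟩
    · exact ⟨0, by simp [hd, hm.ne']⟩
  · exact ⟨1, by simp [hd]⟩

theorem hasDenom_div (u v : ℤ) : HasDenom d v 0 1 ((u : F) / v) := by
  by_cases hv : (v : F) = 0
  · exact ⟨0, by simp [hv]⟩
  · exact ⟨u, by simp [hv]⟩

end Field

theorem cast_two_mul_div_two {a : ℕ} (h : Even a) : 2 * ((a / 2 : ℕ) : ℤ) = a := by
  exact_mod_cast Nat.two_mul_div_two_of_even h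

theorem cast_mul_sub_one_div_two (m : ℕ) : 2 * ((m * (m - 1) / 2 : ℕ) : ℤ) = m * (m - 1) := by
  rcases m with _ | m
  · simp
  · rw [cast_two_mul_div_two (Nat.even_mul_pred_self _)]
    push_cast
    ring

theorem two_mul_sum_range_add (a m : ℕ) :
    2 * ((∑ i ∈ range m, (a + i) : ℕ) : ℤ) = 2 * m * a + m * (m - 1) := by
  induction m with
  | zero => simp
  | succ m ih =>
    rw [sum_range_succ, Nat.cast_add, mul_add, ih]
    push_cast
    ring

theorem two_mul_deltaA (n K : ℕ) :
    2 * (deltaA n K : ℤ) =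
      (K : ℤ) * (K - 1) +
        if K ≤ n then 3 * (n : ℤ) ^ 2 + n else (n : ℤ) * (n - 1) + 2 * n * K := by
  have hsq (m : ℕ) : m ^ 2 - m = m * (m - 1) := by rw [sq, Nat.mul_sub_one]
  unfold deltaA
  split_ifs
  · rw [Nat.cast_add, mul_add, hsq, cast_mul_sub_one_div_two,
      cast_two_mul_div_two (by simp [parity_simps])]
    push_cast
    ring
  · rw [Nat.cast_add, Nat.cast_add, mul_add, mul_add, hsq, hsq, cast_mul_sub_one_div_two,
      cast_mul_sub_one_div_two]
    push_cast
    ring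

theorem int_mul_sub_one_nonneg (x : ℤ) : 0 ≤ x * (x - 1) := by
  rcases le_or_gt x 0 with h | h <;> nlinarith

theorem padeA_exponent_le_deltaA {n k : ℕ} (K : ℕ) (hk : k ≤ n) :
    k * (n - k) + k * n + ∑ i ∈ range (n - k), (n + 1 + i) + k * K ≤ deltaA n K := by
  obtain ⟨j, rfl⟩ := Nat.exists_eq_add_of_le hk
  rw [Nat.add_sub_cancel_left]
  have hδ := two_mul_deltaA (k + j) K
  have hS := two_mul_sum_range_add (k + j + 1) j
  rw [← Nat.cast_le (α := ℤ)]
  simp only [Nat.cast_add, Nat.cast_mul, Nat.cast_one] at hS hδ ⊢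
  split_ifs at hδ with hK
  · nlinarith [int_mul_sub_one_nonneg ((K : ℤ) - k)]
  · have hK' : (k : ℤ) + j + 1 ≤ K := by omega
    nlinarith [int_mul_sub_one_nonneg (j : ℤ),
      mul_nonneg (Nat.cast_nonneg (α := ℤ) j) (sub_nonneg.2 hK')]

theorem padeB_exponent_le_deltaA {n k : ℕ} (K : ℕ) (hk : k ≤ n) :
    ∑ i ∈ range K, i + (k * (n - k) + k * (k - 1) / 2 + ∑ i ∈ range (n - k), (n + 1 + i) + k * K)
      ≤ deltaA n K := by
  obtain ⟨j, rfl⟩ := Nat.exists_eq_add_of_le hk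
  rw [Nat.add_sub_cancel_left]
  have hδ := two_mul_deltaA (k + j) K
  have hS := two_mul_sum_range_add (k + j + 1) j
  have hS0 := two_mul_sum_range_add 0 K
  have hk2 := cast_mul_sub_one_div_two k
  simp only [zero_add, Nat.cast_zero, mul_zero] at hS0
  rw [← Nat.cast_le (α := ℤ)]
  simp only [Nat.cast_add, Nat.cast_mul, Nat.cast_one] at hS hδ ⊢
  split_ifs at hδ with hK
  · nlinarith [mul_nonneg (Nat.cast_nonneg (α := ℤ) k) (show (0:ℤ) ≤ k + j - K by omega)]
  · have hK' : (k : ℤ) + j + 1 ≤ K := by omega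
    nlinarith [mul_nonneg (Nat.cast_nonneg (α := ℤ) j) (sub_nonneg.2 hK')]

section qBinom

variable {q : ℝ}

theorem one_sub_pow_ne_zero_of_abs_lt_one (hq : |q| < 1) {m : ℕ} (hm : m ≠ 0) :
    1 - q ^ m ≠ 0 := by
  intro h
  have hlt := pow_lt_one₀ (abs_nonneg q) hq hm
  rw [← abs_pow, ← sub_eq_zero.1 h, abs_one] at hlt
  exact lt_irrefl 1 hlt

@[simp]
theorem qPoch_zero (q a : ℝ) : qPoch q a 0 = 1 :=
  prod_range_zero _

theorem qPoch_self_succ (q : ℝ) (m : ℕ) :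
    qPoch q q (m + 1) = qPoch q q m * (1 - q ^ (m + 1)) := by
  rw [qPoch, prod_range_succ, ← pow_succ']
  rfl

theorem qPoch_self_ne_zero (hq : |q| < 1) (m : ℕ) : qPoch q q m ≠ 0 := by
  induction m with
  | zero => simp
  | succ m ih =>
    rw [qPoch_self_succ]
    exact mul_ne_zero ih (one_sub_pow_ne_zero_of_abs_lt_one hq m.succ_ne_zero)

theorem qBinom_zero_right (hq : |q| < 1) (n : ℕ) : qBinom q n 0 = 1 := by
  simp [qBinom, qPoch_self_ne_zero hq]

theorem qBinom_self (hq : |q| < 1) (n : ℕ) : qBinom q n n = 1 := by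
  simp [qBinom, qPoch_self_ne_zero hq]

theorem qBinom_succ_succ (hq : |q| < 1) {n k : ℕ} (hk : k < n) :
    qBinom q (n + 1) (k + 1) = qBinom q n k + q ^ (k + 1) * qBinom q n (k + 1) := by
  obtain ⟨j, rfl⟩ := Nat.exists_eq_add_of_lt hk
  have h₁ : k + j + 1 + 1 - (k + 1) = j + 1 := by omega
  have h₂ : k + j + 1 - k = j + 1 := by omega
  have h₃ : k + j + 1 - (k + 1) = j := by omega
  rw [qBinom, qBinom, qBinom, h₁, h₂, h₃, qPoch_self_succ, qPoch_self_succ q k,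
    qPoch_self_succ q j, show q ^ (k + j + 1 + 1) = q ^ (k + 1) * q ^ (j + 1) by ring]
  have := qPoch_self_ne_zero hq k
  have := qPoch_self_ne_zero hq j
  have := one_sub_pow_ne_zero_of_abs_lt_one hq k.succ_ne_zero
  have := one_sub_pow_ne_zero_of_abs_lt_one hq j.succ_ne_zero
  generalize q ^ (k + 1) = x, q ^ (j + 1) = y at *
  field_simp
  ring

end qBinom

theorem abs_one_div_intCast_lt_one {d : ℤ} (hd : 1 < |d|) : |1 / (d : ℝ)| < 1 := by
  have hd₀ : (d : ℝ) ≠ 0 := Int.cast_ne_zero.2 (by rintro rfl; simp at hd)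
  rw [abs_div, abs_one, div_lt_one (abs_pos.2 hd₀)]
  exact_mod_cast hd

theorem hasDenom_qBinom {d : ℤ} (hd : 1 < |d|) (v : ℤ) {n k : ℕ} (hk : k ≤ n) :
    HasDenom d v (k * (n - k)) 0 (qBinom (1 / (d : ℝ)) n k) := by
  have hq := abs_one_div_intCast_lt_one hd
  induction n generalizing k with
  | zero =>
    obtain rfl : k = 0 := by omega
    rw [qBinom_zero_right hq]
    exact HasDenom.one
  | succ n ih =>
    rcases k with _ | k
    · rw [qBinom_zero_right hq]
      exact HasDenom.one
    rcases Nat.lt_or_ge k n with hlt | hge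
    swap
    · obtain rfl : k = n := by omega
      rw [qBinom_self hq]
      exact HasDenom.one
    rw [qBinom_succ_succ hq (by omega)]
    obtain ⟨j, rfl⟩ := Nat.exists_eq_add_of_lt hlt
    refine ((ih (by omega)).mono ?_ le_rfl).add
      (((hasDenom_one_div_pow (k + 1)).mul (ih (by omega))).mono ?_ le_rfl)
    · rw [show k + j + 1 - k = j + 1 by omega, show k + j + 1 + 1 - (k + 1) = j + 1 by omega]
      exact Nat.mul_le_mul_right _ k.le_succ
    · rw [show k + j + 1 - (k + 1) = j by omega, show k + j + 1 + 1 - (k + 1) = j + 1 by omega]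
      exact le_of_eq (by ring)

theorem HasDenom.qPoch {d v : ℤ} {e f : ℕ} {a : ℝ} (ha : HasDenom d v e f a) (M : ℕ) :
    HasDenom d v (∑ i ∈ range M, (e + i)) (M * f) (qPoch (1 / (d : ℝ)) a M) := by
  have h (i : ℕ) (_ : i ∈ range M) : HasDenom d v (e + i) f (1 - a * (1 / (d : ℝ)) ^ i) :=
    HasDenom.one.sub (by simpa using ha.mul (hasDenom_one_div_pow i))
  simpa [_root_.qPoch] using HasDenom.prod h

section Pade

variable {d v : ℤ} {t : ℝ}

theorem hasDenom_padeA (hd : 1 < |d|) (ht : HasDenom d v 0 1 t) (n K : ℕ) :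
    HasDenom d v (deltaA n K) (n + K) (padeA (1 / (d : ℝ)) n ((1 / (d : ℝ)) ^ K * t)) := by
  have hs : HasDenom d v K 1 ((1 / (d : ℝ)) ^ K * t) := by
    simpa using (hasDenom_one_div_pow K).mul ht
  refine HasDenom.sum fun k hk => ?_
  have hk : k ≤ n := Nat.lt_succ_iff.1 (mem_range.1 hk)
  refine ((((hasDenom_qBinom hd v hk).mul (hasDenom_one_div_pow (k * n))).mul
    ((hasDenom_one_div_pow (n + 1)).qPoch (n - k))).mul (hs.pow k)).mono ?_ ?_
  · simpa [mul_comm] using padeA_exponent_le_deltaA K hk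
  · omega

theorem hasDenom_qPoch_mul_padeB (hd : 1 < |d|) (ht : HasDenom d v 0 1 t) (n K : ℕ) :
    HasDenom d v (deltaA n K) (n + K)
      (qPoch (1 / (d : ℝ)) t K * padeB (1 / (d : ℝ)) n ((1 / (d : ℝ)) ^ K * t)) := by
  have hs : HasDenom d v K 1 ((1 / (d : ℝ)) ^ K * t) := by
    simpa using (hasDenom_one_div_pow K).mul ht
  rw [padeB, mul_sum]
  refine HasDenom.sum fun k hk => ?_
  have hk : k ≤ n := Nat.lt_succ_iff.1 (mem_range.1 hk)
  refine ((ht.qPoch K).mul ((((hasDenom_qBinom hd v hk).mul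
    (hasDenom_one_div_pow (k * (k - 1) / 2))).mul
    ((hasDenom_one_div_pow (n + 1)).qPoch (n - k))).mul (hs.neg.pow k))).mono ?_ ?_
  · simpa [mul_comm] using padeB_exponent_le_deltaA K hk
  · omega

end Pade

theorem denominator_bound_case_a_general (d : ℤ) (hd : 2 ≤ |d|) (u : ℤ) (v : ℕ)
    (M N : ℤ) (n K : ℕ) :
    ∃ z : ℤ, (z : ℝ) =
      (v : ℝ) ^ (n + K) * |(d : ℝ)| ^ deltaA n K *
        ((N : ℝ) * padeA (1 / (d : ℝ)) n ((1 / (d : ℝ)) ^ K * ((u : ℝ) / v)) -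
          (M : ℝ) * qPoch (1 / (d : ℝ)) ((u : ℝ) / v) K *
            padeB (1 / (d : ℝ)) n ((1 / (d : ℝ)) ^ K * ((u : ℝ) / v))) := by
  have hd' : 1 < |d| := one_lt_two.trans_le hd
  have ht : HasDenom d v 0 1 ((u : ℝ) / v) := by simpa using hasDenom_div (F := ℝ) (d := d) u v
  obtain ⟨z, hz⟩ := (((HasDenom.intCast N).mul (hasDenom_padeA hd' ht n K)).sub
    ((HasDenom.intCast M).mul (hasDenom_qPoch_mul_padeB hd' ht n K))).abs_left
  refine ⟨z, ?_⟩
  rw [eq_intCast, Int.cast_abs, Int.cast_natCast] at hz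
  rw [hz]
  ring

/-- denominator bound, case (a):
`v^{n+K} |d|^{δ_{n,K}} (N A_n(q^K t) - M (t)_K B_n(q^K t))` is an integer. -/
theorem denominator_bound_case_a (d : ℤ) (hd : 2 ≤ |d|) (u : ℤ) (v : ℕ) (hv : 1 ≤ v)
    (hco : Int.gcd u v = 1) (ht0 : 0 < |(u : ℝ) / v|) (ht1 : |(u : ℝ) / v| < 1)
    (M N : ℤ) (n K : ℕ) :
    ∃ z : ℤ, (z : ℝ) =
      (v : ℝ) ^ (n + K) * |(d : ℝ)| ^ deltaA n K *
        ((N : ℝ) * padeA (1 / (d : ℝ)) n ((1 / (d : ℝ)) ^ K * ((u : ℝ) / v)) -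
          (M : ℝ) * qPoch (1 / (d : ℝ)) ((u : ℝ) / v) K *
            padeB (1 / (d : ℝ)) n ((1 / (d : ℝ)) ^ K * ((u : ℝ) / v))) :=
  denominator_bound_case_a_general d hd u v M N n K
end

section
/- Remainder estimate: for q = 1/d with |d| ≥ 2 integer, 0 < |t| < 1, and all n, K ∈ ℤ_+, |S_n(q^K t)| < 8 |q|^{(3n^2+n)/2 + 2nK + K}. -/
open Finset

/-!
After telescoping the Pochhammer symbols, the coefficient of `s ^ k` in the series of `S_n(s)` is
`(q)_{n+k} / ((q)_k (q)_{2n+1+k})`, which is at most `4` for `|q| ≤ 1/2`: for `q ≥ 0` use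
`(q)_{n+k} ≤ (q)_k` and `(q)_m ≥ 1/4`, for `q ≤ 0` use `1 ≤ (q)_m ≤ 3/2`. With `s = q^K t` and
`K ≥ 1` we have `|s| ≤ 1/2`, so the series is at most `4 / (1 - |s|) ≤ 8`, and `|s|^{2n+1}` supplies
`|q|^{2nK+K}` times `|t|^{2n+1} < 1`.
-/

lemma Finset.one_sub_sum_le_prod_one_sub {ι : Type*} (s : Finset ι) {x : ι → ℝ}
    (h0 : ∀ i ∈ s, 0 ≤ x i) (h1 : ∀ i ∈ s, x i ≤ 1) :
    1 - ∑ i ∈ s, x i ≤ ∏ i ∈ s, (1 - x i) := by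
  classical
  induction s using Finset.induction_on with
  | empty => simp
  | insert i s hi ih =>
    rw [prod_insert hi, sum_insert hi]
    have hs : 0 ≤ ∑ j ∈ s, x j := sum_nonneg fun j hj => h0 j (mem_insert_of_mem hj)
    have ih := ih (fun j hj => h0 j (mem_insert_of_mem hj))
      (fun j hj => h1 j (mem_insert_of_mem hj))
    nlinarith [h0 i (mem_insert_self i s), h1 i (mem_insert_self i s)]

lemma qPoch_succ (q a : ℝ) (m : ℕ) : qPoch q a (m + 1) = qPoch q a m * (1 - a * q ^ m) :=
  prod_range_succ _ m

lemma qPoch_add (q a : ℝ) (m k : ℕ) :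
    qPoch q a (m + k) = qPoch q a m * qPoch q (a * q ^ m) k := by
  rw [qPoch, qPoch, qPoch, prod_range_add]
  congr 1
  exact prod_congr rfl fun j _ => by rw [pow_add, mul_assoc]

lemma qPoch_mul_qPoch_pow_succ (q : ℝ) (m k : ℕ) :
    qPoch q q m * qPoch q (q ^ (m + 1)) k = qPoch q q (m + k) := by
  rw [qPoch_add, pow_succ']

lemma qPoch_add_two (q : ℝ) (m : ℕ) :
    qPoch q q (m + 2) = qPoch q q m * ((1 - q * q ^ m) * (1 - q * (q * q ^ m))) := by
  rw [qPoch_succ, qPoch_succ, pow_succ', mul_assoc]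

lemma qPoch_pos {q a : ℝ} (hq : |q| ≤ 1) (ha : |a| < 1) (m : ℕ) : 0 < qPoch q a m := by
  refine prod_pos fun j _ => ?_
  have : |a * q ^ j| < 1 := by
    rw [abs_mul, abs_pow]
    exact lt_of_le_of_lt (mul_le_of_le_one_right (abs_nonneg a) (pow_le_one₀ (abs_nonneg q) hq)) ha
  linarith [le_abs_self (a * q ^ j)]

section NonnegBase

variable {q : ℝ}

lemma qPoch_le_one {a : ℝ} (hq0 : 0 ≤ q) (hq1 : q ≤ 1) (ha0 : 0 ≤ a) (ha1 : a ≤ 1) (m : ℕ) :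
    qPoch q a m ≤ 1 :=
  prod_le_one (fun j _ => by nlinarith [pow_le_one₀ hq0 hq1 (n := j)])
    (fun j _ => by nlinarith [pow_nonneg hq0 j])

lemma one_fourth_le_qPoch (hq0 : 0 ≤ q) (hq : q ≤ 1 / 2) (m : ℕ) : 1 / 4 ≤ qPoch q q m := by
  cases m with
  | zero => norm_num [qPoch]
  | succ m =>
    have hsum : ∑ j ∈ range m, q * q ^ 1 * q ^ j ≤ q ^ 2 / (1 - q) := by
      rw [← mul_sum, ← Nat.Ico_zero_eq_range]
      have := geom_sum_Ico_le_of_lt_one hq0 (by linarith) (m := 0) (n := m)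
      rw [pow_zero] at this
      calc q * q ^ 1 * ∑ i ∈ Ico 0 m, q ^ i ≤ q * q ^ 1 * (1 / (1 - q)) :=
            mul_le_mul_of_nonneg_left this (by positivity)
        _ = q ^ 2 / (1 - q) := by ring
    -- Weierstrass' inequality on all factors but the first: `(q)_{m+1} ≥ (1 - q)(1 - q²/(1 - q))`.
    have htail := one_sub_sum_le_prod_one_sub (range m) (x := fun j => q * q ^ 1 * q ^ j)
      (fun j _ => by positivity)
      (fun j _ => by nlinarith [pow_le_one₀ hq0 (by linarith : q ≤ 1) (n := j), pow_nonneg hq0 j])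
    have h1 : qPoch q q 1 = 1 - q := by simp [qPoch]
    have hq1 : 0 < 1 - q := by linarith
    have : (1 - q) * (1 - q ^ 2 / (1 - q)) = 1 - q - q ^ 2 := by field_simp
    rw [add_comm, qPoch_add, h1, qPoch]
    nlinarith

end NonnegBase

section NonposBase

variable {q : ℝ}

-- `(1 - x)(1 - q x) = 1 - x (1 + q - q x)` and the last factor is positive, so two consecutive
-- factors of `(q)_m` multiply to something on the opposite side of `1` from `x`.
lemma one_add_sub_mul_pos {x : ℝ} (hq : |q| ≤ 1 / 2) (hx : |x| ≤ 1 / 2) : 0 < 1 + q - q * x := by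
  have : |q * x| ≤ 1 / 4 := by
    rw [abs_mul]; nlinarith [abs_nonneg q, abs_nonneg x]
  linarith [neg_abs_le q, le_abs_self (q * x)]

lemma one_le_one_sub_mul_one_sub_mul {x : ℝ} (hq : |q| ≤ 1 / 2) (hx : |x| ≤ 1 / 2) (hx0 : x ≤ 0) :
    1 ≤ (1 - x) * (1 - q * x) := by
  nlinarith [one_add_sub_mul_pos hq hx]

lemma one_sub_mul_one_sub_mul_mem_Icc {x : ℝ} (hq : |q| ≤ 1 / 2) (hx : |x| ≤ 1 / 2) (hx0 : 0 ≤ x) :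
    (1 - x) * (1 - q * x) ∈ Set.Icc 0 1 := by
  have hqx : |q * x| ≤ 1 / 4 := by
    rw [abs_mul]; nlinarith [abs_nonneg q, abs_nonneg x]
  refine ⟨mul_nonneg ?_ ?_, ?_⟩
  · linarith [le_abs_self x]
  · linarith [le_abs_self (q * x)]
  · nlinarith [one_add_sub_mul_pos hq hx]

lemma abs_mul_pow_le (hq : |q| ≤ 1 / 2) (m : ℕ) : |q * q ^ m| ≤ 1 / 2 := by
  rw [abs_mul, abs_pow]
  exact (mul_le_of_le_one_right (abs_nonneg q) (pow_le_one₀ (abs_nonneg q) (by linarith))).trans hq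

lemma one_le_qPoch_two_mul (hq : -1 / 2 ≤ q) (hq0 : q ≤ 0) (i : ℕ) : 1 ≤ qPoch q q (2 * i) := by
  have habs : |q| ≤ 1 / 2 := abs_le.mpr ⟨by linarith, by linarith⟩
  induction i with
  | zero => simp [qPoch]
  | succ i ih =>
    rw [mul_add_one, qPoch_add_two]
    have hx : q * q ^ (2 * i) ≤ 0 :=
      mul_nonpos_of_nonpos_of_nonneg hq0 ((even_two_mul i).pow_nonneg q)
    have := one_le_one_sub_mul_one_sub_mul habs (abs_mul_pow_le habs _) hx
    nlinarith

lemma one_le_qPoch_of_nonpos (hq : -1 / 2 ≤ q) (hq0 : q ≤ 0) (m : ℕ) : 1 ≤ qPoch q q m := by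
  obtain ⟨i, rfl | rfl⟩ := Nat.even_or_odd' m
  · exact one_le_qPoch_two_mul hq hq0 i
  · rw [qPoch_succ]
    have hx : q * q ^ (2 * i) ≤ 0 :=
      mul_nonpos_of_nonpos_of_nonneg hq0 ((even_two_mul i).pow_nonneg q)
    nlinarith [one_le_qPoch_two_mul hq hq0 i]

lemma qPoch_two_mul_add_one_le (hq : -1 / 2 ≤ q) (hq0 : q ≤ 0) (i : ℕ) :
    qPoch q q (2 * i + 1) ≤ 1 - q := by
  have habs : |q| ≤ 1 / 2 := abs_le.mpr ⟨by linarith, by linarith⟩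
  induction i with
  | zero => simp [qPoch]
  | succ i ih =>
    rw [show 2 * (i + 1) + 1 = 2 * i + 1 + 2 by ring, qPoch_add_two]
    have hx : 0 ≤ q * q ^ (2 * i + 1) :=
      mul_nonneg_of_nonpos_of_nonpos hq0 ((odd_two_mul_add_one i).pow_nonpos_iff.mpr hq0)
    obtain ⟨h0, h1⟩ := one_sub_mul_one_sub_mul_mem_Icc habs (abs_mul_pow_le habs _) hx
    nlinarith [one_le_qPoch_of_nonpos hq hq0 (2 * i + 1)]

lemma qPoch_le_three_halves (hq : -1 / 2 ≤ q) (hq0 : q ≤ 0) (m : ℕ) : qPoch q q m ≤ 3 / 2 := by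
  obtain ⟨i, rfl | rfl⟩ := Nat.even_or_odd' m
  · cases i with
    | zero => norm_num [qPoch]
    | succ i =>
      rw [mul_add_one, show 2 * i + 2 = 2 * i + 1 + 1 by ring, qPoch_succ]
      have hx : 0 ≤ q * q ^ (2 * i + 1) :=
        mul_nonneg_of_nonpos_of_nonpos hq0 ((odd_two_mul_add_one i).pow_nonpos_iff.mpr hq0)
      nlinarith [qPoch_two_mul_add_one_le hq hq0 i, one_le_qPoch_of_nonpos hq hq0 (2 * i + 1)]
  · linarith [qPoch_two_mul_add_one_le hq hq0 i]

end NonposBase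

lemma qPoch_add_le_four_mul {q : ℝ} (hq : |q| ≤ 1 / 2) (k m l : ℕ) :
    qPoch q q (k + m) ≤ 4 * (qPoch q q k * qPoch q q l) := by
  rcases le_total q 0 with hq0 | hq0
  · have hq' : -1 / 2 ≤ q := by linarith [neg_abs_le q]
    nlinarith [qPoch_le_three_halves hq' hq0 (k + m), one_le_qPoch_of_nonpos hq' hq0 k,
      one_le_qPoch_of_nonpos hq' hq0 l]
  · have hq' : q ≤ 1 / 2 := by linarith [le_abs_self q]
    have hsplit : qPoch q q (k + m) ≤ qPoch q q k := by
      rw [qPoch_add]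
      refine mul_le_of_le_one_right (qPoch_pos (by linarith) (by linarith) k).le
        (qPoch_le_one hq0 (by linarith) (by positivity) ?_ m)
      nlinarith [pow_le_one₀ hq0 (by linarith : q ≤ 1) (n := k)]
    nlinarith [one_fourth_le_qPoch hq0 hq' l,
      qPoch_pos (q := q) (a := q) (by linarith) (by linarith) k]

lemma abs_tsum_mul_pow_le {c : ℕ → ℝ} {C s : ℝ} (hc : ∀ k, |c k| ≤ C) (hs : |s| < 1) :
    |∑' k, c k * s ^ k| ≤ C / (1 - |s|) := by
  rw [div_eq_mul_inv, ← Real.norm_eq_abs]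
  refine tsum_of_norm_bounded ((hasSum_geometric_of_lt_one (abs_nonneg s) hs).mul_left C)
    fun k => ?_
  rw [Real.norm_eq_abs, abs_mul, abs_pow]
  exact mul_le_mul_of_nonneg_right (hc k) (by positivity)

lemma padeS_eq {q : ℝ} (hq : |q| < 1) (n : ℕ) (s : ℝ) :
    padeS q n s = (-1) ^ n * s ^ (2 * n + 1) * q ^ ((3 * n ^ 2 + n) / 2) *
      ∑' k, qPoch q q (n + k) / (qPoch q q k * qPoch q q (2 * n + 1 + k)) * s ^ k := by
  have hq1 : |q| ≤ 1 := hq.le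
  rw [padeS, mul_assoc _ (qPoch q q n / _), ← tsum_mul_left]
  congr 2
  funext k
  rw [← qPoch_mul_qPoch_pow_succ q n k, ← qPoch_mul_qPoch_pow_succ q (2 * n + 1) k,
    show 2 * n + 1 + 1 = 2 * n + 2 by ring]
  have hq_pow : |q ^ (2 * n + 2)| < 1 := by
    rw [abs_pow]; exact pow_lt_one₀ (abs_nonneg q) hq (by omega)
  have h1 := qPoch_pos hq1 hq (2 * n + 1)
  have h2 := qPoch_pos hq1 hq k
  have h3 := qPoch_pos hq1 hq_pow k
  field_simp

lemma abs_padeS_le {q : ℝ} (hq : |q| ≤ 1 / 2) (n : ℕ) {s : ℝ} (hs : |s| < 1) :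
    |padeS q n s| ≤ |s| ^ (2 * n + 1) * |q| ^ ((3 * n ^ 2 + n) / 2) * (4 / (1 - |s|)) := by
  have hq1 : |q| ≤ 1 := by linarith
  have hcoeff : ∀ k, |qPoch q q (n + k) / (qPoch q q k * qPoch q q (2 * n + 1 + k))| ≤ 4 := by
    intro k
    have h1 := qPoch_pos hq1 (by linarith) (n + k) (a := q)
    have h2 := qPoch_pos hq1 (by linarith) k (a := q)
    have h3 := qPoch_pos hq1 (by linarith) (2 * n + 1 + k) (a := q)
    rw [abs_of_pos (by positivity), div_le_iff₀ (by positivity), add_comm]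
    exact qPoch_add_le_four_mul hq k n _
  rw [padeS_eq (by linarith) n s, abs_mul, abs_mul, abs_mul, abs_pow, abs_neg, abs_one, one_pow,
    one_mul, abs_pow, abs_pow]
  gcongr
  exact abs_tsum_mul_pow_le hcoeff hs

theorem remainder_estimate_general (d : ℤ) (hd : 2 ≤ |d|) (t : ℝ) (ht1 : |t| < 1)
    (n K : ℕ) (hK : 1 ≤ K) :
    |padeS (1 / (d : ℝ)) n ((1 / (d : ℝ)) ^ K * t)| <
      8 * |1 / (d : ℝ)| ^ ((3 * n ^ 2 + n) / 2 + 2 * n * K + K) := by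
  set q : ℝ := 1 / (d : ℝ)
  have hd2 : (2 : ℝ) ≤ |(d : ℝ)| := by rw [← Int.cast_abs]; exact_mod_cast hd
  have hq : |q| ≤ 1 / 2 := by
    rw [abs_div, abs_one, div_le_div_iff₀ (by linarith) (by norm_num)]; linarith
  have hq0 : 0 < |q| := by simp only [q, abs_div, abs_one]; positivity
  have hs : |q ^ K * t| = |q| ^ K * |t| := by rw [abs_mul, abs_pow]
  have hs_half : |q ^ K * t| ≤ 1 / 2 := by
    have hqK : |q| ^ K ≤ 1 / 2 := (pow_le_of_le_one hq0.le (by linarith) (by omega)).trans hq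
    rw [hs]; nlinarith [abs_nonneg t, pow_pos hq0 K]
  calc |padeS q n (q ^ K * t)|
      ≤ |q ^ K * t| ^ (2 * n + 1) * |q| ^ ((3 * n ^ 2 + n) / 2) * (4 / (1 - |q ^ K * t|)) :=
        abs_padeS_le hq n (by linarith)
    _ ≤ |q ^ K * t| ^ (2 * n + 1) * |q| ^ ((3 * n ^ 2 + n) / 2) * 8 := by
        gcongr; rw [div_le_iff₀ (by linarith)]; linarith
    _ = |t| ^ (2 * n + 1) * (8 * |q| ^ ((3 * n ^ 2 + n) / 2 + 2 * n * K + K)) := by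
        rw [hs]; ring
    _ < 8 * |q| ^ ((3 * n ^ 2 + n) / 2 + 2 * n * K + K) :=
        mul_lt_of_lt_one_left (by positivity) (pow_lt_one₀ (abs_nonneg t) ht1 (by omega))

/-- remainder estimate `|S_n(q^K t)| < 8 |q|^{(3n²+n)/2 + 2nK + K}`. -/
theorem remainder_estimate (d : ℤ) (hd : 2 ≤ |d|) (t : ℝ) (ht0 : 0 < |t|) (ht1 : |t| < 1)
    (n K : ℕ) (hn : 1 ≤ n) (hK : 1 ≤ K) :
    |padeS (1 / (d : ℝ)) n ((1 / (d : ℝ)) ^ K * t)| <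
      8 * |1 / (d : ℝ)| ^ ((3 * n ^ 2 + n) / 2 + 2 * n * K + K) :=
  remainder_estimate_general d hd t ht1 n K hK
end
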